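/- Let T = Σ_{i=1}^{m} T_i where each T_i = Σ_{k ∈ C_i} exp(⟨q,k⟩), clusters C_i have diameter at most 2δ, and ||q||_2 ≤ r. If for each i, τ_i is the scaled empirical mean of exp(⟨q,·⟩) over t ≥ 3ε^{-2}e^{2δr}log(2m/η) i.i.d. uniform samples from C_i (scaled by |C_i|), then with probability at least 1-η, the total estimate τ = Σ_i τ_i satisfies |τ - T| ≤ εT. -/

import Mathlib

/-!
For a cluster `C`, the sampled values `exp ⟪q, k⟫` lie in `[0, b]`, where `b` is their
maximum over `C`, and the diameter bound gives `b ≤ e^{2δr} μ` for their mean `μ`. By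
convexity of `exp`, `𝔼 e^{uX/b} ≤ exp (μ (e^u - 1) / b)` for such a variable, and Chernoff's
method turns this into the multiplicative bound: the sum of `t` independent samples deviates
from `tμ` by more than `ε t μ` with probability at most
`2 exp (-t μ ε² / (3b)) ≤ 2 exp (-t ε² e^{-2δr} / 3) ≤ η / m`.
Rescaling, each cluster estimate has relative error at most `ε` outside an event of probability
`η / m`; a union bound over the `m` clusters and the triangle inequality give the claim.
-/

open scoped RealInnerProductSpace
open MeasureTheory ProbabilityTheory Finset Real

lemma Real.exp_mul_le_one_add_mul_exp_sub_one (u : ℝ) {s : ℝ} (h0 : 0 ≤ s) (h1 : s ≤ 1) :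
    exp (u * s) ≤ 1 + s * (exp u - 1) := by
  have h := convexOn_exp.2 (Set.mem_univ 0) (Set.mem_univ u) (sub_nonneg.2 h1) h0
    (sub_add_cancel 1 s)
  simp only [smul_eq_mul, mul_zero, zero_add, exp_zero, mul_one] at h
  rw [mul_comm u s]
  linarith

/- The exponents `17/25 * ε` and `-(2/3) * ε` stand in for the optimal `log (1 ± ε)` of the
Chernoff method: they still give `exp (-μ ε² / 3)` tails, and need only Taylor bounds on `exp`. -/
lemma Real.exp_sub_one_sub_mul_one_add_le {ε : ℝ} (h0 : 0 < ε) (h1 : ε ≤ 1) :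
    exp (17 / 25 * ε) - 1 - 17 / 25 * ε * (1 + ε) ≤ -(ε ^ 2 / 3) := by
  have hb := exp_bound' (x := 17 / 25 * ε) (by positivity) (by linarith) (n := 4) (by norm_num)
  norm_num [sum_range_succ, Nat.factorial] at hb
  nlinarith [pow_le_pow_of_le_one h0.le h1 (by norm_num : 2 ≤ 3),
    pow_le_pow_of_le_one h0.le h1 (by norm_num : 2 ≤ 4)]

lemma Real.exp_neg_sub_one_add_mul_one_sub_le {ε : ℝ} (h0 : 0 < ε) (h1 : ε ≤ 1) :
    exp (-(2 / 3 * ε)) - 1 + 2 / 3 * ε * (1 - ε) ≤ -(ε ^ 2 / 3) := by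
  have hx : |-(2 / 3 * ε)| ≤ 1 := by rw [abs_neg, abs_of_pos (by positivity)]; linarith
  have hb := (abs_sub_le_iff.1 (exp_bound hx (n := 2) (by norm_num))).1
  norm_num [sum_range_succ, abs_of_pos h0] at hb
  nlinarith

lemma lt_abs_mul_sub_iff {a x y ε : ℝ} (ha : 0 < a) :
    ε * y < |a * x - y| ↔ ε * (y / a) < |x - y / a| := by
  have hdiff : a * x - y = a * (x - y / a) := by field_simp
  have hε : ε * y = a * (ε * (y / a)) := by field_simp
  rw [hdiff, hε, abs_mul, abs_of_pos ha, mul_lt_mul_iff_right₀ ha]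

lemma abs_sum_sub_sum_le_mul_sum {ι : Type*} (s : Finset ι) {a b : ι → ℝ} {ε : ℝ}
    (h : ∀ i ∈ s, |a i - b i| ≤ ε * b i) :
    |∑ i ∈ s, a i - ∑ i ∈ s, b i| ≤ ε * ∑ i ∈ s, b i := by
  rw [← sum_sub_distrib, mul_sum]
  exact (abs_sum_le_sum_abs _ _).trans (sum_le_sum h)

lemma card_mul_le_mul_sum_of_le_mul {α : Type*} {C : Finset α} {f : α → ℝ} {K : ℝ} {k₀ : α}
    (hK : ∀ k ∈ C, f k₀ ≤ K * f k) :
    #C * f k₀ ≤ K * ∑ k ∈ C, f k := by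
  rw [mul_sum, ← nsmul_eq_mul, ← sum_const]
  exact sum_le_sum hK

lemma two_mul_exp_neg_le_of_three_mul_log_le {t ε K a : ℝ} (hε : ε ≠ 0) (hK : 0 < K)
    (ha : 0 < a) (ht : 3 * ε⁻¹ ^ 2 * K * log a ≤ t) :
    2 * exp (-(t * ε ^ 2 / (3 * K))) ≤ 2 / a := by
  have hexponent : log a ≤ t * ε ^ 2 / (3 * K) := by
    rw [le_div_iff₀ (by positivity)]
    calc log a * (3 * K) = 3 * ε⁻¹ ^ 2 * K * log a * ε ^ 2 := by field_simp
      _ ≤ t * ε ^ 2 := by gcongr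
  calc 2 * exp (-(t * ε ^ 2 / (3 * K))) ≤ 2 * exp (-log a) := by gcongr
    _ = 2 / a := by rw [exp_neg, exp_log ha, div_eq_mul_inv]

lemma exp_inner_le_exp_mul_exp_inner {E : Type*} [NormedAddCommGroup E]
    [InnerProductSpace ℝ E] {q k k' : E} {r D : ℝ} (hq : ‖q‖ ≤ r) (hk : dist k k' ≤ D) :
    exp ⟪q, k⟫ ≤ exp (D * r) * exp ⟪q, k'⟫ := by
  have h : ⟪q, k - k'⟫ ≤ D * r := calc
    _ ≤ ‖q‖ * ‖k - k'‖ := real_inner_le_norm q _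
    _ ≤ r * D := by
      rw [← dist_eq_norm]; exact mul_le_mul hq hk dist_nonneg ((norm_nonneg q).trans hq)
    _ = D * r := mul_comm r D
  rw [inner_sub_right] at h
  rw [← exp_add]
  exact exp_le_exp.2 (by linarith)

namespace PMF

variable {α : Type*} [MeasurableSpace α] [MeasurableSingletonClass α] {s : Finset α}
  (hs : s.Nonempty)

lemma ae_mem_uniformOfFinset : ∀ᵐ x ∂(uniformOfFinset s hs).toMeasure, x ∈ s := by
  change (uniformOfFinset s hs).toMeasure (s : Set α)ᶜ = 0
  rw [toMeasure_apply_eq_zero_iff _ s.finite_toSet.measurableSet.compl, support_uniformOfFinset]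
  exact disjoint_compl_right

lemma integral_uniformOfFinset (f : α → ℝ) :
    ∫ x, f x ∂(uniformOfFinset s hs).toMeasure = (#s : ℝ)⁻¹ * ∑ x ∈ s, f x := by
  have hsupp := (uniformOfFinset s hs).restrict_toMeasure_support
  rw [support_uniformOfFinset] at hsupp
  rw [← hsupp, setIntegral_finset _ IntegrableOn.finset, mul_sum]
  refine sum_congr rfl fun x hx => ?_
  rw [measureReal_def, toMeasure_apply_singleton _ _ (measurableSet_singleton x),
    uniformOfFinset_apply_of_mem hs hx, smul_eq_mul, ENNReal.toReal_inv, ENNReal.toReal_natCast]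

end PMF

namespace ProbabilityTheory

variable {Ω ι : Type*} {mΩ : MeasurableSpace Ω} {P : Measure Ω} [IsProbabilityMeasure P]
  {b : ℝ}

lemma mgf_div_le_of_mem_Icc {X : Ω → ℝ} (hX : AEMeasurable X P) (hb : 0 < b)
    (hXb : ∀ᵐ ω ∂P, X ω ∈ Set.Icc 0 b) (u : ℝ) :
    mgf X P (u / b) ≤ exp (P[X] / b * (exp u - 1)) := by
  have hlin : Integrable (fun ω => X ω / b * (exp u - 1)) P :=
    ((Integrable.of_mem_Icc 0 b hX hXb).div_const b).mul_const _
  calc mgf X P (u / b) ≤ ∫ ω, 1 + X ω / b * (exp u - 1) ∂P := by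
        refine integral_mono_ae (integrable_exp_mul_of_mem_Icc hX hXb)
          ((integrable_const 1).add hlin) ?_
        filter_upwards [hXb] with ω hω
        rw [div_mul_comm, mul_comm]
        exact exp_mul_le_one_add_mul_exp_sub_one u (div_nonneg hω.1 hb.le)
          ((div_le_one hb).2 hω.2)
    _ = 1 + P[X] / b * (exp u - 1) := by
        rw [integral_add (integrable_const 1) hlin, integral_const, integral_mul_const,
          integral_div]
        simp
    _ ≤ exp (P[X] / b * (exp u - 1)) := by
        linarith [add_one_le_exp (P[X] / b * (exp u - 1))]

section Chernoff

variable {X : ι → Ω → ℝ} (hindep : iIndepFun X P) (hX : ∀ i, Measurable (X i))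
  (hb : 0 < b) (hXb : ∀ i, ∀ᵐ ω ∂P, X i ω ∈ Set.Icc 0 b) (s : Finset ι)
include hindep hX hb hXb

lemma iIndepFun.mgf_sum_div_le (u : ℝ) :
    mgf (∑ i ∈ s, X i) P (u / b) ≤ exp ((∑ i ∈ s, P[X i]) / b * (exp u - 1)) := by
  rw [hindep.mgf_sum hX, sum_div, sum_mul, exp_sum]
  exact prod_le_prod (fun i _ => mgf_nonneg)
    fun i _ => mgf_div_le_of_mem_Icc (hX i).aemeasurable hb (hXb i) u

lemma iIndepFun.measureReal_sum_ge_le {ε : ℝ} (hε0 : 0 < ε) (hε1 : ε ≤ 1) :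
    P.real {ω | (1 + ε) * ∑ i ∈ s, P[X i] ≤ ∑ i ∈ s, X i ω} ≤
      exp (-((∑ i ∈ s, P[X i]) / b * (ε ^ 2 / 3))) := by
  set M := ∑ i ∈ s, P[X i]
  have hM : 0 ≤ M / b := div_nonneg (sum_nonneg fun i _ =>
    integral_nonneg_of_ae (by filter_upwards [hXb i] with ω h using h.1)) hb.le
  have htail := measure_ge_le_exp_mul_mgf (X := ∑ i ∈ s, X i) ((1 + ε) * M)
    (t := 17 / 25 * ε / b) (by positivity) (hindep.integrable_exp_mul_sum hX fun i _ =>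
      integrable_exp_mul_of_mem_Icc (hX i).aemeasurable (hXb i))
  simp only [Finset.sum_apply] at htail
  calc _ ≤ _ := htail
    _ ≤ exp (-(17 / 25 * ε / b) * ((1 + ε) * M)) * exp (M / b * (exp (17 / 25 * ε) - 1)) :=
        mul_le_mul_of_nonneg_left (hindep.mgf_sum_div_le hX hb hXb s _) (exp_pos _).le
    _ = exp (M / b * (exp (17 / 25 * ε) - 1 - 17 / 25 * ε * (1 + ε))) := by
        rw [← exp_add]; congr 1; ring
    _ ≤ exp (-(M / b * (ε ^ 2 / 3))) :=
        exp_le_exp.2 <| (mul_le_mul_of_nonneg_left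
          (exp_sub_one_sub_mul_one_add_le hε0 hε1) hM).trans_eq (mul_neg _ _)

lemma iIndepFun.measureReal_sum_le_le {ε : ℝ} (hε0 : 0 < ε) (hε1 : ε ≤ 1) :
    P.real {ω | ∑ i ∈ s, X i ω ≤ (1 - ε) * ∑ i ∈ s, P[X i]} ≤
      exp (-((∑ i ∈ s, P[X i]) / b * (ε ^ 2 / 3))) := by
  set M := ∑ i ∈ s, P[X i]
  have hM : 0 ≤ M / b := div_nonneg (sum_nonneg fun i _ =>
    integral_nonneg_of_ae (by filter_upwards [hXb i] with ω h using h.1)) hb.le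
  have htail := measure_le_le_exp_mul_mgf (X := ∑ i ∈ s, X i) ((1 - ε) * M)
    (t := -(2 / 3 * ε) / b) (div_nonpos_of_nonpos_of_nonneg (by linarith) hb.le)
    (hindep.integrable_exp_mul_sum hX fun i _ =>
      integrable_exp_mul_of_mem_Icc (hX i).aemeasurable (hXb i))
  simp only [Finset.sum_apply] at htail
  calc _ ≤ _ := htail
    _ ≤ exp (-(-(2 / 3 * ε) / b) * ((1 - ε) * M)) *
          exp (M / b * (exp (-(2 / 3 * ε)) - 1)) :=
        mul_le_mul_of_nonneg_left (hindep.mgf_sum_div_le hX hb hXb s _) (exp_pos _).le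
    _ = exp (M / b * (exp (-(2 / 3 * ε)) - 1 + 2 / 3 * ε * (1 - ε))) := by
        rw [← exp_add]; congr 1; ring
    _ ≤ exp (-(M / b * (ε ^ 2 / 3))) :=
        exp_le_exp.2 <| (mul_le_mul_of_nonneg_left
          (exp_neg_sub_one_add_mul_one_sub_le hε0 hε1) hM).trans_eq (mul_neg _ _)

lemma iIndepFun.measureReal_abs_sum_sub_gt_le {ε : ℝ} (hε0 : 0 < ε) (hε1 : ε ≤ 1) :
    P.real {ω | ε * ∑ i ∈ s, P[X i] < |∑ i ∈ s, X i ω - ∑ i ∈ s, P[X i]|} ≤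
      2 * exp (-((∑ i ∈ s, P[X i]) / b * (ε ^ 2 / 3))) := by
  calc _ ≤ P.real ({ω | (1 + ε) * ∑ i ∈ s, P[X i] ≤ ∑ i ∈ s, X i ω} ∪
        {ω | ∑ i ∈ s, X i ω ≤ (1 - ε) * ∑ i ∈ s, P[X i]}) := by
        refine measureReal_mono fun ω hω => ?_
        rcases lt_abs.1 hω.out with h | h
        · exact Or.inl (Set.mem_ofPred.2 (by linarith))
        · exact Or.inr (Set.mem_ofPred.2 (by linarith))
    _ ≤ _ := measureReal_union_le _ _
    _ ≤ _ := by
        rw [two_mul]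
        exact add_le_add (hindep.measureReal_sum_ge_le hX hb hXb s hε0 hε1)
          (hindep.measureReal_sum_le_le hX hb hXb s hε0 hε1)

end Chernoff

lemma ofReal_one_sub_le_measure_of_measureReal_le [Fintype ι] {A : Set Ω} (G : ι → Set Ω)
    {η : ℝ} (hη : 0 ≤ η) (hA : ∀ ω, (∀ i, ω ∉ G i) → ω ∈ A)
    (hG : ∀ i, P.real (G i) ≤ η / Fintype.card ι) :
    ENNReal.ofReal (1 - η) ≤ P A := by
  have hunion : P.real (⋃ i, G i) ≤ η := by
    refine (measureReal_iUnion_fintype_le G).trans ((sum_le_sum fun i _ => hG i).trans ?_)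
    rw [sum_const, card_univ, nsmul_eq_mul]
    rcases eq_or_ne (Fintype.card ι : ℝ) 0 with h | h
    · rw [h, zero_mul]; exact hη
    · rw [mul_div_cancel₀ _ h]
  have hcompl : Aᶜ ⊆ ⋃ i, G i := fun ω hω => by
    by_contra h
    exact hω (hA ω fun i hi => h (Set.mem_iUnion_of_mem i hi))
  calc ENNReal.ofReal (1 - η) = 1 - ENNReal.ofReal η := by
        rw [ENNReal.ofReal_sub _ hη, ENNReal.ofReal_one]
    _ ≤ P A := by
        rw [tsub_le_iff_right, ← measure_univ (μ := P)]
        refine (measure_univ_le_add_compl A).trans (add_le_add_right ?_ _)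
        rw [← ENNReal.ofReal_toReal (measure_ne_top P _)]
        exact ENNReal.ofReal_le_ofReal ((measureReal_mono hcompl).trans hunion)

lemma uniform_sampling_relative_error_measureReal_le {α : Type*} [MeasurableSpace α]
    [MeasurableSingletonClass α] {C : Finset α} (hC : C.Nonempty) {t : ℕ} {Y : Fin t → Ω → α}
    (hY : iIndepFun Y P) (hYm : ∀ j, Measurable (Y j))
    (hlaw : ∀ j, P.map (Y j) = (PMF.uniformOfFinset C hC).toMeasure)
    {f : α → ℝ} (hf : Measurable f) (hpos : ∀ k ∈ C, 0 < f k)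
    {K : ℝ} (hK : ∀ k ∈ C, ∀ k' ∈ C, f k ≤ K * f k') {ε : ℝ} (hε0 : 0 < ε) (hε1 : ε ≤ 1) :
    P.real {ω | ε * ∑ k ∈ C, f k < |(#C : ℝ) / t * ∑ j, f (Y j ω) - ∑ k ∈ C, f k|} ≤
      2 * exp (-(t * ε ^ 2 / (3 * K))) := by
  rcases t.eq_zero_or_pos with rfl | ht
  · simpa using measureReal_le_one.trans one_le_two
  obtain ⟨k₀, hk₀, hmax⟩ := C.exists_max_image f hC
  set T := ∑ k ∈ C, f k
  have hc : (0 : ℝ) < #C := by exact_mod_cast hC.card_pos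
  have htR : (0 : ℝ) < t := by exact_mod_cast ht
  have hmean : ∀ j, P[fun ω => f (Y j ω)] = (#C : ℝ)⁻¹ * T := fun j => by
    rw [← integral_map (hYm j).aemeasurable hf.aestronglyMeasurable, hlaw,
      PMF.integral_uniformOfFinset]
  have hrange : ∀ j, ∀ᵐ ω ∂P, f (Y j ω) ∈ Set.Icc 0 (f k₀) := fun j => by
    refine ae_of_ae_map (p := fun k => f k ∈ Set.Icc 0 (f k₀)) (hYm j).aemeasurable ?_
    filter_upwards [hlaw j ▸ PMF.ae_mem_uniformOfFinset hC] with k hk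
    exact ⟨(hpos k hk).le, hmax k hk⟩
  have hchernoff := (hY.comp (fun _ => f) fun _ => hf).measureReal_abs_sum_sub_gt_le
    (fun j => hf.comp (hYm j)) (hpos k₀ hk₀) hrange univ hε0 hε1
  simp only [Function.comp_apply, hmean, sum_const, card_univ, Fintype.card_fin,
    nsmul_eq_mul] at hchernoff
  have hrescale : T / ((#C : ℝ) / t) = t * ((#C : ℝ)⁻¹ * T) := by field_simp
  simp only [lt_abs_mul_sub_iff (div_pos hc htR), hrescale]
  refine hchernoff.trans ?_
  have hb := hpos k₀ hk₀
  have hK0 : 0 < K := pos_of_mul_pos_left (hb.trans_le (hK k₀ hk₀ k₀ hk₀)) hb.le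
  have hbK := card_mul_le_mul_sum_of_le_mul (hK k₀ hk₀)
  gcongr 2 * exp (-?_)
  calc (t : ℝ) * ε ^ 2 / (3 * K) = t / K * (ε ^ 2 / 3) := by ring
    _ ≤ _ := by
        refine mul_le_mul_of_nonneg_right ?_ (by positivity)
        rw [div_le_div_iff₀ hK0 hb, inv_mul_eq_div, mul_div_assoc', div_mul_eq_mul_div,
          le_div_iff₀ hc]
        linarith [mul_le_mul_of_nonneg_left hbK htR.le]

end ProbabilityTheory

theorem clustered_partition_function_estimate_general {d m t : ℕ} (δ r ε η : ℝ)
    (hε : ε ∈ Set.Ioo (0 : ℝ) 1) (hη : η ∈ Set.Ioo (0 : ℝ) 1)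
    (C : Fin m → Finset (EuclideanSpace ℝ (Fin d))) (hC : ∀ i, (C i).Nonempty)
    (hdiam : ∀ i, ∀ k ∈ C i, ∀ k' ∈ C i, dist k k' ≤ 2 * δ)
    (q : EuclideanSpace ℝ (Fin d)) (hq : ‖q‖ ≤ r)
    (ht : 3 * ε⁻¹ ^ 2 * Real.exp (2 * δ * r) * Real.log (2 * m / η) ≤ (t : ℝ)) :
    ENNReal.ofReal (1 - η) ≤
      (Measure.pi fun p : Fin m × Fin t => (PMF.uniformOfFinset (C p.1) (hC p.1)).toMeasure)
        {S : Fin m × Fin t → EuclideanSpace ℝ (Fin d) |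
          |(∑ i, ((C i).card : ℝ) / (t : ℝ) * ∑ j, Real.exp ⟪q, S (i, j)⟫) -
              ∑ i, ∑ k ∈ C i, Real.exp ⟪q, k⟫| ≤
            ε * ∑ i, ∑ k ∈ C i, Real.exp ⟪q, k⟫} := by
  set ν := fun p : Fin m × Fin t => (PMF.uniformOfFinset (C p.1) (hC p.1)).toMeasure
  have hsamples : iIndepFun (fun p (S : Fin m × Fin t → EuclideanSpace ℝ (Fin d)) => S p)
      (Measure.pi ν) := iIndepFun_pi (X := fun _ => id) fun _ => aemeasurable_id
  refine ofReal_one_sub_le_measure_of_measureReal_le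
    (fun i => {S | ε * ∑ k ∈ C i, exp ⟪q, k⟫ <
      |((C i).card : ℝ) / t * ∑ j, exp ⟪q, S (i, j)⟫ - ∑ k ∈ C i, exp ⟪q, k⟫|})
    hη.1.le ?_ fun i => ?_
  · exact fun S hS => Set.mem_ofPred.2 <|
      abs_sum_sub_sum_le_mul_sum univ fun i _ => not_lt.1 (hS i)
  have hY : iIndepFun (fun j (S : Fin m × Fin t → EuclideanSpace ℝ (Fin d)) => S (i, j))
      (Measure.pi ν) := hsamples.precomp (Prod.mk_right_injective i)
  have hlaw (j : Fin t) : (Measure.pi ν).map (fun S => S (i, j)) =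
      (PMF.uniformOfFinset (C i) (hC i)).toMeasure := (measurePreserving_eval ν (i, j)).map_eq
  have hK : ∀ k ∈ C i, ∀ k' ∈ C i, exp ⟪q, k⟫ ≤ exp (2 * δ * r) * exp ⟪q, k'⟫ :=
    fun k hk k' hk' => exp_inner_le_exp_mul_exp_inner hq (hdiam i k hk k' hk')
  have hm : (0 : ℝ) < m := by exact_mod_cast i.pos
  calc _ ≤ 2 * exp (-(t * ε ^ 2 / (3 * exp (2 * δ * r)))) :=
        uniform_sampling_relative_error_measureReal_le (hC i) hY
          (fun j => measurable_pi_apply (i, j)) hlaw (by fun_prop) (fun k _ => exp_pos _) hK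
          hε.1 hε.2.le
    _ ≤ 2 / (2 * m / η) :=
        two_mul_exp_neg_le_of_three_mul_log_le hε.1.ne' (exp_pos _)
          (div_pos (by positivity) hη.1) ht
    _ = η / Fintype.card (Fin m) := by rw [Fintype.card_fin]; field_simp

/-- Union-bound version of the per-cluster Chernoff estimate: the clusters
`C 1, ..., C m` are disjoint finite sets of vectors of diameter at most `2δ`, `‖q‖ ≤ r`,
and for each cluster `i` the estimate `τ_i` is the empirical mean of `exp⟨q,·⟩` over
`t ≥ 3 ε⁻² e^{2δr} log(2m/η)` i.i.d. uniform samples from `C i`, scaled by `|C i|`;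
samples across clusters are independent. Then with probability at least `1 - η` the
total estimate `τ = Σ_i τ_i` satisfies `|τ - T| ≤ ε·T` for
`T = Σ_i Σ_{k ∈ C i} exp⟨q,k⟩`. -/
theorem clustered_partition_function_estimate {d m t : ℕ} (δ r ε η : ℝ)
    (hδ : 0 < δ) (hr : 0 < r) (hε : ε ∈ Set.Ioo (0 : ℝ) 1) (hη : η ∈ Set.Ioo (0 : ℝ) 1)
    (C : Fin m → Finset (EuclideanSpace ℝ (Fin d))) (hC : ∀ i, (C i).Nonempty)
    (hdisj : ∀ i j, i ≠ j → Disjoint (C i) (C j))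
    (hdiam : ∀ i, ∀ k ∈ C i, ∀ k' ∈ C i, dist k k' ≤ 2 * δ)
    (q : EuclideanSpace ℝ (Fin d)) (hq : ‖q‖ ≤ r)
    (ht : 3 * ε⁻¹ ^ 2 * Real.exp (2 * δ * r) * Real.log (2 * m / η) ≤ (t : ℝ)) :
    ENNReal.ofReal (1 - η) ≤
      (Measure.pi fun p : Fin m × Fin t => (PMF.uniformOfFinset (C p.1) (hC p.1)).toMeasure)
        {S : Fin m × Fin t → EuclideanSpace ℝ (Fin d) |
          |(∑ i, ((C i).card : ℝ) / (t : ℝ) * ∑ j, Real.exp ⟪q, S (i, j)⟫) -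
              ∑ i, ∑ k ∈ C i, Real.exp ⟪q, k⟫| ≤
            ε * ∑ i, ∑ k ∈ C i, Real.exp ⟪q, k⟫} :=
  clustered_partition_function_estimate_general δ r ε η hε hη C hC hdiam q hq ht
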